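/- Mechanism 1 (the dictator mechanism) places l1 = x_t and, with d_A = max_{x_j ≤ x_t}(x_t − x_j) and d_B = max_{x_j ≥ x_t}(x_j − x_t), sets l2 = l1 + max(2·d_A, d_B) if d_A ≤ d_B, and l2 = l1 − max(d_A, 2·d_B) otherwise. For every profile x ∈ ℝ^n (n ≥ 2), the social cost of Mechanism 1 on x is at most (n − 1)·OPT(x). -/

import Mathlib

noncomputable def cost2 (p : ℝ × ℝ) (y : ℝ) : ℝ := min |p.1 - y| |p.2 - y|

noncomputable def SC {n : ℕ} (p : ℝ × ℝ) (x : Fin n → ℝ) : ℝ := ∑ i, cost2 p (x i)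

noncomputable def OPT {n : ℕ} (x : Fin n → ℝ) : ℝ :=
  sInf {c | ∃ l1 l2 : ℝ, c = SC (l1, l2) x}

/-- `d_A = max_{x_j ≤ x_t} (x_t - x_j)`. -/
noncomputable def dA {n : ℕ} (x : Fin n → ℝ) (t : Fin n) : ℝ :=
  (Finset.univ.filter fun j => x j ≤ x t).sup'
    ⟨t, by simp⟩ (fun j => x t - x j)

/-- `d_B = max_{x_j ≥ x_t} (x_j - x_t)`. -/
noncomputable def dB {n : ℕ} (x : Fin n → ℝ) (t : Fin n) : ℝ :=
  (Finset.univ.filter fun j => x t ≤ x j).sup'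
    ⟨t, by simp⟩ (fun j => x j - x t)

/-- Mechanism 1 with dictator `t`. -/
noncomputable def mech1 {n : ℕ} (x : Fin n → ℝ) (t : Fin n) : ℝ × ℝ :=
  (x t,
    if dA x t ≤ dB x t then x t + max (2 * dA x t) (dB x t)
    else x t - max (dA x t) (2 * dB x t))


/-!
Agent `t` pays nothing, so it suffices to bound every other agent's cost by the cost `C` of an
arbitrary pair of facilities. Two facilities cannot serve three points cheaply: two of them share
a facility, so the cost is at least the smaller of the two gaps. Applied to the extreme agents on
both sides of `x t`, this gives `d_A ≤ C` when `d_A ≤ d_B`; agents left of `x t` then cost at most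
`d_A`, and an agent right of `x t` lies between `x t` and `l2`, where it costs at most `d_A` if
`l2 = x t + 2 d_A`, and at most the smaller gap of the triple `x t ≤ x j ≤ l2` if `l2` is the
rightmost agent. The case `d_B < d_A` is the mirror image under `x ↦ -x`.
-/

lemma cost2_nonneg (p : ℝ × ℝ) (y : ℝ) : 0 ≤ cost2 p y :=
  le_min (abs_nonneg _) (abs_nonneg _)

lemma SC_nonneg {n : ℕ} (p : ℝ × ℝ) (x : Fin n → ℝ) : 0 ≤ SC p x :=
  Finset.sum_nonneg fun _ _ => cost2_nonneg _ _

lemma min_gap_le_cost2_add_add (c : ℝ × ℝ) {y₁ y₂ y₃ : ℝ} (h₁₂ : y₁ ≤ y₂) (h₂₃ : y₂ ≤ y₃) :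
    min (y₂ - y₁) (y₃ - y₂) ≤ cost2 c y₁ + cost2 c y₂ + cost2 c y₃ := by
  have tri : ∀ a u v : ℝ, u ≤ v → v - u ≤ |a - u| + |a - v| := fun a u v _ => by
    linarith [abs_sub_le v a u, abs_sub_comm v a, le_abs_self (v - u)]
  unfold cost2
  -- each point picks one of the two facilities, so some two points pick the same one
  rcases min_choice |c.1 - y₁| |c.2 - y₁| with h₁ | h₁ <;>
  rcases min_choice |c.1 - y₂| |c.2 - y₂| with h₂ | h₂ <;>
  rcases min_choice |c.1 - y₃| |c.2 - y₃| with h₃ | h₃ <;>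
  rw [h₁, h₂, h₃] <;>
  linarith [tri c.1 y₁ y₂ h₁₂, tri c.2 y₁ y₂ h₁₂, tri c.1 y₂ y₃ h₂₃, tri c.2 y₂ y₃ h₂₃,
    tri c.1 y₁ y₃ (h₁₂.trans h₂₃), tri c.2 y₁ y₃ (h₁₂.trans h₂₃),
    abs_nonneg (c.1 - y₁), abs_nonneg (c.2 - y₁), abs_nonneg (c.1 - y₂),
    abs_nonneg (c.2 - y₂), abs_nonneg (c.1 - y₃), abs_nonneg (c.2 - y₃),
    min_le_left (y₂ - y₁) (y₃ - y₂), min_le_right (y₂ - y₁) (y₃ - y₂)]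

section Profile

variable {n : ℕ} (x : Fin n → ℝ)

lemma min_gap_le_SC (c : ℝ × ℝ) {i j k : Fin n} (hij : x i ≤ x j) (hjk : x j ≤ x k) :
    min (x j - x i) (x k - x j) ≤ SC c x := by
  by_cases hdeg : i = j ∨ j = k ∨ i = k
  · have hmin : min (x j - x i) (x k - x j) ≤ 0 := by
      rcases hdeg with rfl | rfl | rfl
      · simp
      · simp
      · exact min_le_of_left_le (by linarith)
    exact hmin.trans (SC_nonneg c x)
  · push Not at hdeg
    obtain ⟨hij', hjk', hik'⟩ := hdeg
    calc min (x j - x i) (x k - x j)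
        ≤ cost2 c (x i) + cost2 c (x j) + cost2 c (x k) := min_gap_le_cost2_add_add c hij hjk
      _ = ∑ m ∈ {i, j, k}, cost2 c (x m) := by
        rw [Finset.sum_insert (by simp [hij', hik']), Finset.sum_pair hjk', add_assoc]
      _ ≤ SC c x :=
        Finset.sum_le_sum_of_subset_of_nonneg (Finset.subset_univ _)
          fun _ _ _ => cost2_nonneg _ _

variable {x} {t j : Fin n}

lemma sub_le_dA (hj : x j ≤ x t) : x t - x j ≤ dA x t :=
  Finset.le_sup' (fun j => x t - x j) (Finset.mem_filter.mpr ⟨Finset.mem_univ j, hj⟩)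

lemma sub_le_dB (hj : x t ≤ x j) : x j - x t ≤ dB x t :=
  Finset.le_sup' (fun j => x j - x t) (Finset.mem_filter.mpr ⟨Finset.mem_univ j, hj⟩)

variable (x t)

lemma exists_dA_eq : ∃ j, x j ≤ x t ∧ dA x t = x t - x j := by
  obtain ⟨j, hj, h⟩ := Finset.exists_mem_eq_sup'
    (⟨t, by simp⟩ : (Finset.univ.filter fun j => x j ≤ x t).Nonempty) fun j => x t - x j
  exact ⟨j, (Finset.mem_filter.mp hj).2, h⟩

lemma exists_dB_eq : ∃ j, x t ≤ x j ∧ dB x t = x j - x t := by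
  obtain ⟨j, hj, h⟩ := Finset.exists_mem_eq_sup'
    (⟨t, by simp⟩ : (Finset.univ.filter fun j => x t ≤ x j).Nonempty) fun j => x j - x t
  exact ⟨j, (Finset.mem_filter.mp hj).2, h⟩

lemma dA_neg : dA (-x) t = dB x t :=
  Finset.sup'_congr _ (by ext; simp) fun _ _ => by simp only [Pi.neg_apply]; ring

lemma dB_neg : dB (-x) t = dA x t :=
  Finset.sup'_congr _ (by ext; simp) fun _ _ => by simp only [Pi.neg_apply]; ring

lemma SC_neg (p : ℝ × ℝ) : SC (-p) (-x) = SC p x := by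
  refine Finset.sum_congr rfl fun i _ => ?_
  simp only [cost2, Prod.fst_neg, Prod.snd_neg, Pi.neg_apply, ← neg_sub', abs_neg]

lemma mech1_eq_neg_mech1_neg (h : dB x t < dA x t) : mech1 x t = -mech1 (-x) t := by
  simp only [mech1, dA_neg, dB_neg, if_pos h.le, if_neg (not_le.mpr h), Pi.neg_apply,
    Prod.neg_mk, neg_neg, neg_add_rev, max_comm (dA x t)]
  ring_nf

variable {x t}

lemma dA_le_SC (h : dA x t ≤ dB x t) (c : ℝ × ℝ) : dA x t ≤ SC c x := by
  obtain ⟨a, hat, ha⟩ := exists_dA_eq x t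
  obtain ⟨b, htb, hb⟩ := exists_dB_eq x t
  calc dA x t = min (x t - x a) (x b - x t) := by rw [← ha, ← hb, min_eq_left h]
    _ ≤ SC c x := min_gap_le_SC x c hat htb

lemma cost2_mech1_le_SC (h : dA x t ≤ dB x t) (c : ℝ × ℝ) (j : Fin n) :
    cost2 (mech1 x t) (x j) ≤ SC c x := by
  have hA := dA_le_SC h c
  simp only [mech1, if_pos h, cost2]
  rcases le_total (x j) (x t) with hjt | htj
  · calc min |x t - x j| _ ≤ |x t - x j| := min_le_left _ _
      _ = x t - x j := abs_of_nonneg (by linarith)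
      _ ≤ SC c x := (sub_le_dA hjt).trans hA
  have hjB := sub_le_dB htj
  have hmax := le_max_right (2 * dA x t) (dB x t)
  rw [abs_of_nonpos (by linarith), abs_of_nonneg (by linarith), neg_sub]
  rcases le_total (dB x t) (2 * dA x t) with hBA | hAB
  · rw [max_eq_left hBA]
    -- the two distances add up to `2 d_A`
    calc min (x j - x t) _ ≤ dA x t := by
          rcases le_total (x j - x t) (dA x t) with h' | h'
          · exact min_le_of_left_le h'
          · exact min_le_of_right_le (by linarith)
      _ ≤ SC c x := hA
  · obtain ⟨b, htb, hb⟩ := exists_dB_eq x t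
    rw [max_eq_right hAB, hb, add_sub_cancel]
    exact min_gap_le_SC x c htj (by linarith)

lemma SC_mech1_le_of_dA_le_dB (h : dA x t ≤ dB x t) (c : ℝ × ℝ) :
    SC (mech1 x t) x ≤ ((n : ℝ) - 1) * SC c x := by
  have hself : cost2 (mech1 x t) (x t) = 0 := by simp [cost2, mech1]
  calc SC (mech1 x t) x
      = cost2 (mech1 x t) (x t) + ∑ j ∈ Finset.univ.erase t, cost2 (mech1 x t) (x j) :=
        (Finset.add_sum_erase _ _ (Finset.mem_univ t)).symm
    _ ≤ 0 + (Finset.univ.erase t).card • SC c x := by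
        rw [hself]
        gcongr
        exact Finset.sum_le_card_nsmul _ _ _ fun j _ => cost2_mech1_le_SC h c j
    _ = ((n : ℝ) - 1) * SC c x := by
        rw [zero_add, Finset.card_erase_of_mem (Finset.mem_univ t), Finset.card_univ,
          Fintype.card_fin, nsmul_eq_mul, Nat.cast_pred t.pos]

lemma SC_mech1_le (c : ℝ × ℝ) : SC (mech1 x t) x ≤ ((n : ℝ) - 1) * SC c x := by
  rcases le_or_gt (dA x t) (dB x t) with h | h
  · exact SC_mech1_le_of_dA_le_dB h c
  · have h' : dA (-x) t ≤ dB (-x) t := by rw [dA_neg, dB_neg]; exact h.le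
    calc SC (mech1 x t) x = SC (mech1 (-x) t) (-x) := by
          rw [mech1_eq_neg_mech1_neg x t h, ← SC_neg (-x), neg_neg]
      _ ≤ ((n : ℝ) - 1) * SC (-c) (-x) := SC_mech1_le_of_dA_le_dB h' (-c)
      _ = ((n : ℝ) - 1) * SC c x := by rw [SC_neg]

lemma le_mul_OPT {a b : ℝ} (ha : 0 ≤ a) (h : ∀ c : ℝ × ℝ, b ≤ a * SC c x) :
    b ≤ a * OPT x := by
  rw [OPT, ← smul_eq_mul, ← Real.sInf_smul_of_nonneg ha]
  refine le_csInf ⟨a * SC (0, 0) x, Set.smul_mem_smul_set ⟨0, 0, rfl⟩⟩ ?_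
  rintro _ ⟨_, ⟨l₁, l₂, rfl⟩, rfl⟩
  exact h (l₁, l₂)

end Profile

theorem stmt5_general {n : ℕ} (x : Fin n → ℝ) (t : Fin n) :
    SC (mech1 x t) x ≤ ((n : ℝ) - 1) * OPT x := by
  exact le_mul_OPT (sub_nonneg.mpr (Nat.one_le_cast.mpr t.pos)) SC_mech1_le

/-- The social cost of Mechanism 1 is at most `(n - 1)·OPT(x)`. -/
theorem stmt5 {n : ℕ} (hn : 2 ≤ n) (x : Fin n → ℝ) (t : Fin n) :
    SC (mech1 x t) x ≤ ((n : ℝ) - 1) * OPT x :=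
  stmt5_general x t
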